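/- Let h be a smooth positive function on a neighborhood of 0 in ℂ. Define the point 0 to be an intrinsic vanishing point if (∂_z log h)(0)·(∂_z ∂_z̄ log h)(0) − (∂_z ∂_z̄ ∂_z log h)(0) = 0. If f is holomorphic near 0 with f(0)=0 and f'(0)≠0, and the condition holds for the metric factor h in the coordinate η = f(z), then it also holds for the pulled-back metric factor h̃(z,z̄) = h(f(z), f(z)‾)|f'(z)|² at z = 0. -/

import Mathlib

open Complex ComplexConjugate

/-- Wirtinger derivative `∂_z = ½(∂_x − i∂_y)`. -/
noncomputable def wdz (f : ℂ → ℂ) (z : ℂ) : ℂ :=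
  (1/2) * (fderiv ℝ f z 1 - Complex.I * fderiv ℝ f z Complex.I)

/-- Wirtinger derivative `∂_z̄ = ½(∂_x + i∂_y)`. -/
noncomputable def wdzbar (f : ℂ → ℂ) (z : ℂ) : ℂ :=
  (1/2) * (fderiv ℝ f z 1 + Complex.I * fderiv ℝ f z Complex.I)

/-- `(∂_z log h)(∂_z∂_z̄ log h) − ∂_z∂_z̄∂_z log h`, in terms of `L = log h`. -/
noncomputable def ivExpr (L : ℂ → ℂ) (z : ℂ) : ℂ :=
  wdz L z * wdzbar (wdz L) z - wdz (wdzbar (wdz L)) z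

lemma key_sub' (A : ℂ →L[ℝ] ℂ) (a b : ℝ) :
    A ((a:ℂ) + b*I) - I * A (I * ((a:ℂ) + b*I)) = ((a:ℂ) + b*I) * (A 1 - I * A I) := by
  have h1 : ((a:ℂ) + b*I) = a • (1:ℂ) + b • I := by rw [Complex.real_smul, Complex.real_smul]; ring
  have h2 : I * ((a:ℂ) + b*I) = (-b) • (1:ℂ) + a • I := by
    rw [Complex.real_smul, Complex.real_smul]; push_cast
    linear_combination (b:ℂ) * Complex.I_sq
  nth_rewrite 1 [h1]
  rw [h2]
  simp only [map_add, map_smul]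
  simp only [Complex.real_smul]
  push_cast
  linear_combination ((b:ℂ) * A I) * Complex.I_sq

lemma key_add' (A : ℂ →L[ℝ] ℂ) (a b : ℝ) :
    A ((a:ℂ) + b*I) + I * A (I * ((a:ℂ) + b*I)) = ((a:ℂ) - b*I) * (A 1 + I * A I) := by
  have h1 : ((a:ℂ) + b*I) = a • (1:ℂ) + b • I := by rw [Complex.real_smul, Complex.real_smul]; ring
  have h2 : I * ((a:ℂ) + b*I) = (-b) • (1:ℂ) + a • I := by
    rw [Complex.real_smul, Complex.real_smul]; push_cast
    linear_combination (b:ℂ) * Complex.I_sq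
  nth_rewrite 1 [h1]
  rw [h2]
  simp only [map_add, map_smul]
  simp only [Complex.real_smul]
  push_cast
  linear_combination ((b:ℂ) * A I) * Complex.I_sq

lemma key_sub (A : ℂ →L[ℝ] ℂ) (c : ℂ) :
    A c - I * A (I * c) = c * (A 1 - I * A I) := by
  have := key_sub' A c.re c.im
  rwa [Complex.re_add_im c] at this

lemma key_add (A : ℂ →L[ℝ] ℂ) (c : ℂ) :
    A c + I * A (I * c) = (conj c) * (A 1 + I * A I) := by
  have := key_add' A c.re c.im
  rw [Complex.re_add_im c] at this
  rwa [show ((c.re:ℂ) - c.im * I) = conj c by apply Complex.ext <;> simp] at this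

lemma fderiv_holo_apply {g : ℂ → ℂ} {w : ℂ} (hg : DifferentiableAt ℂ g w) (v : ℂ) :
    fderiv ℝ g w v = deriv g w * v := by
  rw [hg.fderiv_restrictScalars ℝ]
  have : fderiv ℂ g w v = v * (fderiv ℂ g w 1) := by
    conv_lhs => rw [show v = v • (1:ℂ) by simp]
    rw [map_smul, smul_eq_mul]
  rw [ContinuousLinearMap.coe_restrictScalars']
  rw [this, fderiv_apply_one_eq_deriv]; ring

lemma wdz_holo {g : ℂ → ℂ} {w : ℂ} (hg : DifferentiableAt ℂ g w) : wdz g w = deriv g w := by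
  simp only [wdz, fderiv_holo_apply hg]
  linear_combination (-(1/2) : ℂ) * deriv g w * Complex.I_sq

lemma wdzbar_holo {g : ℂ → ℂ} {w : ℂ} (hg : DifferentiableAt ℂ g w) : wdzbar g w = 0 := by
  simp only [wdzbar, fderiv_holo_apply hg]
  linear_combination ((1/2) : ℂ) * deriv g w * Complex.I_sq

lemma fderiv_conj_holo_apply {g : ℂ → ℂ} {w : ℂ} (hg : DifferentiableAt ℂ g w) (v : ℂ) :
    fderiv ℝ (fun z => conj (g z)) w v = conj (deriv g w * v) := by
  have h1 : fderiv ℝ (fun z => Complex.conjCLE (g z)) w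
      = (Complex.conjCLE : ℂ ≃L[ℝ] ℂ).toContinuousLinearMap.comp (fderiv ℝ g w) :=
    Complex.conjCLE.comp_fderiv (f := g) (x := w)
  have h2 : fderiv ℝ (fun z => conj (g z)) w v
      = Complex.conjCLE (fderiv ℝ g w v) := by
    rw [show (fun z => conj (g z)) = (fun z => Complex.conjCLE (g z)) from rfl, h1]; rfl
  rw [h2, fderiv_holo_apply hg]; rfl

lemma wdz_conj_holo {g : ℂ → ℂ} {w : ℂ} (hg : DifferentiableAt ℂ g w) :
    wdz (fun z => conj (g z)) w = 0 := by
  simp only [wdz, fderiv_conj_holo_apply hg, map_mul, Complex.conj_I, mul_one]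
  linear_combination ((1/2) : ℂ) * conj (deriv g w) * Complex.I_sq

lemma wdzbar_conj_holo {g : ℂ → ℂ} {w : ℂ} (hg : DifferentiableAt ℂ g w) :
    wdzbar (fun z => conj (g z)) w = conj (deriv g w) := by
  simp only [wdzbar, fderiv_conj_holo_apply hg, map_mul, Complex.conj_I, mul_one]
  linear_combination (-(1/2) : ℂ) * conj (deriv g w) * Complex.I_sq

lemma wdz_comp {F f : ℂ → ℂ} {w : ℂ} (hF : DifferentiableAt ℝ F (f w))
    (hf : DifferentiableAt ℂ f w) :
    wdz (fun z => F (f z)) w = wdz F (f w) * deriv f w := by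
  have hc : fderiv ℝ (fun z => F (f z)) w = (fderiv ℝ F (f w)).comp (fderiv ℝ f w) :=
    fderiv_comp w hF (hf.restrictScalars ℝ)
  simp only [wdz, hc, ContinuousLinearMap.comp_apply, fderiv_holo_apply hf, mul_one]
  rw [show deriv f w * I = I * deriv f w from mul_comm _ _,
    key_sub (fderiv ℝ F (f w)) (deriv f w)]
  ring

lemma wdzbar_comp {F f : ℂ → ℂ} {w : ℂ} (hF : DifferentiableAt ℝ F (f w))
    (hf : DifferentiableAt ℂ f w) :
    wdzbar (fun z => F (f z)) w = wdzbar F (f w) * conj (deriv f w) := by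
  have hc : fderiv ℝ (fun z => F (f z)) w = (fderiv ℝ F (f w)).comp (fderiv ℝ f w) :=
    fderiv_comp w hF (hf.restrictScalars ℝ)
  simp only [wdzbar, hc, ContinuousLinearMap.comp_apply, fderiv_holo_apply hf, mul_one]
  rw [show deriv f w * I = I * deriv f w from mul_comm _ _,
    key_add (fderiv ℝ F (f w)) (deriv f w)]
  ring

lemma wdz_add {F G : ℂ → ℂ} {w : ℂ} (hF : DifferentiableAt ℝ F w)
    (hG : DifferentiableAt ℝ G w) :
    wdz (fun z => F z + G z) w = wdz F w + wdz G w := by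
  simp only [wdz, fderiv_fun_add hF hG, ContinuousLinearMap.add_apply]
  ring

lemma wdzbar_add {F G : ℂ → ℂ} {w : ℂ} (hF : DifferentiableAt ℝ F w)
    (hG : DifferentiableAt ℝ G w) :
    wdzbar (fun z => F z + G z) w = wdzbar F w + wdzbar G w := by
  simp only [wdzbar, fderiv_fun_add hF hG, ContinuousLinearMap.add_apply]
  ring

lemma wdz_mul {F G : ℂ → ℂ} {w : ℂ} (hF : DifferentiableAt ℝ F w)
    (hG : DifferentiableAt ℝ G w) :
    wdz (fun z => F z * G z) w = wdz F w * G w + F w * wdz G w := by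
  simp only [wdz, fderiv_fun_mul hF hG, ContinuousLinearMap.add_apply,
    ContinuousLinearMap.smul_apply, smul_eq_mul]
  ring

lemma wdzbar_mul {F G : ℂ → ℂ} {w : ℂ} (hF : DifferentiableAt ℝ F w)
    (hG : DifferentiableAt ℝ G w) :
    wdzbar (fun z => F z * G z) w = wdzbar F w * G w + F w * wdzbar G w := by
  simp only [wdzbar, fderiv_fun_mul hF hG, ContinuousLinearMap.add_apply,
    ContinuousLinearMap.smul_apply, smul_eq_mul]
  ring

lemma wdz_congr_nhds {F G : ℂ → ℂ} {x : ℂ} (h : F =ᶠ[nhds x] G) : wdz F =ᶠ[nhds x] wdz G := by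
  filter_upwards [h.fderiv (𝕜 := ℝ)] with w hw
  simp [wdz, hw]

lemma wdzbar_congr_nhds {F G : ℂ → ℂ} {x : ℂ} (h : F =ᶠ[nhds x] G) :
    wdzbar F =ᶠ[nhds x] wdzbar G := by
  filter_upwards [h.fderiv (𝕜 := ℝ)] with w hw
  simp [wdzbar, hw]

lemma wdz_congr {F G : ℂ → ℂ} {x : ℂ} (h : F =ᶠ[nhds x] G) : wdz F x = wdz G x := by
  simp [wdz, h.fderiv_eq]

lemma wdzbar_congr {F G : ℂ → ℂ} {x : ℂ} (h : F =ᶠ[nhds x] G) : wdzbar F x = wdzbar G x := by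
  simp [wdzbar, h.fderiv_eq]

lemma ivExpr_congr {F G : ℂ → ℂ} {x : ℂ} (h : F =ᶠ[nhds x] G) : ivExpr F x = ivExpr G x := by
  have h1 := wdz_congr_nhds h
  have h2 := wdzbar_congr_nhds h1
  simp only [ivExpr]
  rw [h1.eq_of_nhds, h2.eq_of_nhds, wdz_congr h2]

lemma contDiffAt_wdz {F : ℂ → ℂ} {z : ℂ} {n : WithTop ℕ∞} (hF : ContDiffAt ℝ (n+1) F z) :
    ContDiffAt ℝ n (wdz F) z := by
  have h1 := hF.fderiv_right (le_refl _)
  exact contDiffAt_const.mul ((h1.clm_apply contDiffAt_const).sub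
    (contDiffAt_const.mul (h1.clm_apply contDiffAt_const)))

lemma contDiffAt_wdzbar {F : ℂ → ℂ} {z : ℂ} {n : WithTop ℕ∞} (hF : ContDiffAt ℝ (n+1) F z) :
    ContDiffAt ℝ n (wdzbar F) z := by
  have h1 := hF.fderiv_right (le_refl _)
  exact contDiffAt_const.mul ((h1.clm_apply contDiffAt_const).add
    (contDiffAt_const.mul (h1.clm_apply contDiffAt_const)))

/-- Invariance of the intrinsic vanishing condition at `0` under a holomorphic
change of coordinates `η = f(z)` with `f(0)=0`, `f'(0)≠0`. -/
theorem stmt1 (h : ℂ → ℝ) (f : ℂ → ℂ) (r : ℝ) (hr : 0 < r)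
    (hsm : ContDiffOn ℝ (⊤ : ℕ∞) h (Metric.ball (0:ℂ) r))
    (hpos : ∀ z ∈ Metric.ball (0:ℂ) r, 0 < h z)
    (hf : ∀ z ∈ Metric.ball (0:ℂ) r, DifferentiableAt ℂ f z)
    (hf0 : f 0 = 0) (hf'0 : deriv f 0 ≠ 0)
    (hvanish : ivExpr (fun η => (Real.log (h η) : ℂ)) 0 = 0) :
    ivExpr (fun w => (Real.log (h (f w) * ‖deriv f w‖^2) : ℂ)) 0 = 0 := by
  classical
  have h0mem : (0:ℂ) ∈ Metric.ball (0:ℂ) r := Metric.mem_ball_self hr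
  have hball : Metric.ball (0:ℂ) r ∈ nhds (0:ℂ) :=
    Metric.isOpen_ball.mem_nhds h0mem
  set L : ℂ → ℂ := fun η => (Real.log (h η) : ℂ) with hLdef
  have hL : ∀ η ∈ Metric.ball (0:ℂ) r, ContDiffAt ℝ (⊤ : ℕ∞) L η := by
    intro η hη
    have hh : ContDiffAt ℝ (⊤ : ℕ∞) h η := hsm.contDiffAt (Metric.isOpen_ball.mem_nhds hη)
    have hlog : ContDiffAt ℝ (⊤ : ℕ∞) Real.log (h η) := Real.contDiffAt_log.mpr (ne_of_gt (hpos η hη))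
    exact Complex.ofRealCLM.contDiff.contDiffAt.comp η (hlog.comp η hh)
  have hfo : DifferentiableOn ℂ f (Metric.ball 0 r) := fun z hz => (hf z hz).differentiableWithinAt
  have hfa : AnalyticOnNhd ℂ f (Metric.ball 0 r) := hfo.analyticOnNhd Metric.isOpen_ball
  have hf'a : AnalyticOnNhd ℂ (deriv f) (Metric.ball 0 r) := hfa.deriv
  have hf'c : ContinuousAt (deriv f) 0 := (hf'a 0 h0mem).continuousAt
  have E1 : ∀ᶠ w in nhds (0:ℂ), w ∈ Metric.ball (0:ℂ) r := hball
  have E2 : ∀ᶠ w in nhds (0:ℂ), f w ∈ Metric.ball (0:ℂ) r := by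
    have hc : ContinuousAt f 0 := (hf 0 h0mem).continuousAt
    have ht : Filter.Tendsto f (nhds 0) (nhds 0) := by
      simpa [hf0] using hc.tendsto
    exact ht hball
  have E3 : ∀ᶠ w in nhds (0:ℂ), DifferentiableAt ℂ f w := E1.mono (fun w hw => hf w hw)
  have E4 : ∀ᶠ w in nhds (0:ℂ), deriv f w ≠ 0 := hf'c.eventually_ne hf'0
  have E5 : ∀ᶠ w in nhds (0:ℂ), deriv f w / deriv f 0 ∈ Complex.slitPlane := by
    have hc : ContinuousAt (fun w => deriv f w / deriv f 0) 0 := hf'c.div_const _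
    exact hc.eventually_mem (Complex.isOpen_slitPlane.mem_nhds
      (by rw [div_self hf'0]; exact Complex.one_mem_slitPlane))
  have E6 : ∀ᶠ w in nhds (0:ℂ), DifferentiableAt ℂ (deriv f) w :=
    E1.mono (fun w hw => (hf'a w hw).differentiableAt)
  set g : ℂ → ℂ := fun w => Complex.log (deriv f 0) + Complex.log (deriv f w / deriv f 0)
    with hgdef
  have E7 : ∀ᶠ w in nhds (0:ℂ), DifferentiableAt ℂ g w := by
    filter_upwards [E5, E6] with w h5 h6
    exact (differentiableAt_const _).add
      ((h6.div_const _).clog h5)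
  have E8 : ∀ᶠ w in nhds (0:ℂ), Complex.exp (g w) = deriv f w := by
    filter_upwards [E4] with w h4
    simp only [hgdef]
    rw [Complex.exp_add, Complex.exp_log hf'0, Complex.exp_log (div_ne_zero h4 hf'0)]
    field_simp
  have E9 : ∀ᶠ w in nhds (0:ℂ), AnalyticAt ℂ g w := by
    obtain ⟨t, ht, htd⟩ := E7.exists_mem
    have hint : interior t ∈ nhds (0:ℂ) := interior_mem_nhds.mpr ht
    filter_upwards [hint] with w hw
    exact DifferentiableOn.analyticAt
      (fun z hz => (htd z (interior_subset hz)).differentiableWithinAt)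
      (isOpen_interior.mem_nhds hw)
  have E10 : ∀ᶠ w in nhds (0:ℂ), DifferentiableAt ℂ (deriv g) w := by
    obtain ⟨t, ht, htd⟩ := E9.exists_mem
    have hga : AnalyticOnNhd ℂ g t := fun z hz => htd z hz
    have hd : AnalyticOnNhd ℂ (deriv g) t := hga.deriv
    filter_upwards [ht] with w hw
    exact (hd w hw).differentiableAt
  have EE : (fun w => (Real.log (h (f w) * ‖deriv f w‖^2) : ℂ))
      =ᶠ[nhds (0:ℂ)] (fun w => L (f w) + g w + conj (g w)) := by
    filter_upwards [E2, E4, E8] with w h2 h4 h8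
    have hpos' : 0 < h (f w) := hpos _ h2
    have habs : ‖deriv f w‖ = Real.exp ((g w).re) := by
      rw [← h8, Complex.norm_exp]
    have habs2 : ‖deriv f w‖^2 = Real.exp (2 * (g w).re) := by
      rw [habs, sq, ← Real.exp_add]; ring_nf
    rw [habs2, Real.log_mul (ne_of_gt hpos') (Real.exp_ne_zero _), Real.log_exp]
    rw [show L (f w) = (Real.log (h (f w)) : ℂ) from rfl, add_assoc, Complex.add_conj]
    push_cast
    ring
  rw [ivExpr_congr EE]
  -- differentiability of the pieces of L at points of the ball
  have hLwdz : ∀ η ∈ Metric.ball (0:ℂ) r, ContDiffAt ℝ (⊤ : ℕ∞) (wdz L) η :=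
    fun η hη => contDiffAt_wdz ((hL η hη).of_le (by simp))
  have hLW : ∀ η ∈ Metric.ball (0:ℂ) r, ContDiffAt ℝ (⊤ : ℕ∞) (wdzbar (wdz L)) η :=
    fun η hη => contDiffAt_wdzbar ((hLwdz η hη).of_le (by simp))
  -- Step A
  have SA : wdz (fun w => L (f w) + g w + conj (g w)) =ᶠ[nhds (0:ℂ)]
      (fun w => wdz L (f w) * deriv f w + deriv g w) := by
    filter_upwards [E2, E3, E7] with w h2 h3 h7
    have hLfw : DifferentiableAt ℝ L (f w) := (hL (f w) h2).differentiableAt (by simp)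
    have hLof : DifferentiableAt ℝ (fun z => L (f z)) w := hLfw.comp w (h3.restrictScalars ℝ)
    have hgr : DifferentiableAt ℝ g w := h7.restrictScalars ℝ
    have hcg : DifferentiableAt ℝ (fun z => conj (g z)) w :=
      Complex.conjCLE.differentiableAt.comp w hgr
    have e1 : wdz (fun z => (L (f z) + g z) + conj (g z)) w
        = wdz (fun z => L (f z) + g z) w + wdz (fun z => conj (g z)) w :=
      wdz_add (hLof.add hgr) hcg
    rw [show (fun w => L (f w) + g w + conj (g w))
        = (fun z => (L (f z) + g z) + conj (g z)) from rfl, e1,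
      wdz_add hLof hgr, wdz_comp hLfw h3, wdz_holo h7, wdz_conj_holo h7]
    ring
  -- Step B
  have SB : wdzbar (wdz (fun w => L (f w) + g w + conj (g w))) =ᶠ[nhds (0:ℂ)]
      (fun w => wdzbar (wdz L) (f w) * conj (deriv f w) * deriv f w) := by
    refine (wdzbar_congr_nhds SA).trans ?_
    filter_upwards [E2, E3, E6, E10] with w h2 h3 h6 h10
    have hwdzLfw : DifferentiableAt ℝ (wdz L) (f w) :=
      (hLwdz (f w) h2).differentiableAt (by simp)
    have hcomp : DifferentiableAt ℝ (fun z => wdz L (f z)) w :=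
      hwdzLfw.comp w (h3.restrictScalars ℝ)
    have hf'r : DifferentiableAt ℝ (deriv f) w := h6.restrictScalars ℝ
    have hg'r : DifferentiableAt ℝ (deriv g) w := h10.restrictScalars ℝ
    rw [show (fun w => wdz L (f w) * deriv f w + deriv g w)
        = (fun z => (wdz L (f z) * deriv f z) + deriv g z) from rfl,
      wdzbar_add (hcomp.fun_mul hf'r) hg'r, wdzbar_mul hcomp hf'r,
      wdzbar_comp hwdzLfw h3, wdzbar_holo h6, wdzbar_holo h10]
    ring
  -- Step C
  have hf00 : DifferentiableAt ℂ f 0 := hf 0 h0mem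
  have hf'd0 : DifferentiableAt ℂ (deriv f) 0 := (hf'a 0 h0mem).differentiableAt
  have hfmem : f 0 ∈ Metric.ball (0:ℂ) r := by rw [hf0]; exact h0mem
  have SC : wdz (wdzbar (wdz (fun w => L (f w) + g w + conj (g w)))) 0
      = wdz (wdzbar (wdz L)) 0 * deriv f 0 * (conj (deriv f 0) * deriv f 0)
        + wdzbar (wdz L) 0 * (conj (deriv f 0) * deriv (deriv f) 0) := by
    rw [wdz_congr SB]
    have hWfw : DifferentiableAt ℝ (wdzbar (wdz L)) (f 0) :=
      (hLW (f 0) hfmem).differentiableAt (by simp)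
    have hWcomp : DifferentiableAt ℝ (fun z => wdzbar (wdz L) (f z)) 0 :=
      hWfw.comp 0 (hf00.restrictScalars ℝ)
    have hf'r : DifferentiableAt ℝ (deriv f) 0 := hf'd0.restrictScalars ℝ
    have hconjf' : DifferentiableAt ℝ (fun z => conj (deriv f z)) 0 :=
      Complex.conjCLE.differentiableAt.comp 0 hf'r
    rw [show (fun w => wdzbar (wdz L) (f w) * conj (deriv f w) * deriv f w)
        = (fun z => (wdzbar (wdz L) (f z) * conj (deriv f z)) * deriv f z) from rfl,
      wdz_mul (hWcomp.fun_mul hconjf') hf'r, wdz_mul hWcomp hconjf',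
      wdz_comp hWfw hf00, wdz_conj_holo hf'd0, wdz_holo hf'd0]
    rw [hf0]
    ring
  -- derivative relation for g
  have hg0 : DifferentiableAt ℂ g 0 := E7.self_of_nhds
  have hgrel : deriv f 0 * deriv g 0 = deriv (deriv f) 0 := by
    have hd : deriv (fun w => Complex.exp (g w)) 0 = deriv (deriv f) 0 :=
      Filter.EventuallyEq.deriv_eq E8
    rw [← hd, deriv_cexp hg0, E8.self_of_nhds]
  have SA0 := SA.eq_of_nhds
  have SB0 := SB.eq_of_nhds
  simp only [ivExpr] at hvanish ⊢
  rw [SA0, SB0, SC, hf0]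
  linear_combination (deriv f 0 ^ 2 * conj (deriv f 0)) * hvanish
    + (wdzbar (wdz L) 0 * conj (deriv f 0)) * hgrel
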